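/- There exists a constant C > 0 such that for all ε ∈ [−1/2, 1/2] and all x ∈ ℝ, one has |((4+ε)/2)·sech²(((2+ε)/2)·x) − 2sech²x − ε·q₁(x) − ε²·q₂(x)| ≤ C·|ε|³·(1 + |x|³)·sech²(x/2), where q₁(x) = sech²x·(1/2 − 2x·tanh x) and q₂(x) = (1/2)·(2x²·tanh²x·sech²x − x²·sech⁴x − x·tanh x·sech²x). -/

import Mathlib

noncomputable def sech (x : ℝ) : ℝ := 1 / Real.cosh x

noncomputable def q₁ (x : ℝ) : ℝ := sech x ^ 2 * (1 / 2 - 2 * x * Real.tanh x)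

noncomputable def q₂ (x : ℝ) : ℝ :=
  (1 / 2) * (2 * x ^ 2 * Real.tanh x ^ 2 * sech x ^ 2
    - x ^ 2 * sech x ^ 4 - x * Real.tanh x * sech x ^ 2)

lemma sech_hasDerivAt (y : ℝ) : HasDerivAt sech (-(sech y * Real.tanh y)) y := by
  have h := (Real.hasDerivAt_cosh y).inv (Real.cosh_pos y).ne'
  have he : sech = fun t => (Real.cosh t)⁻¹ := by
    funext t; simp [sech, one_div]
  rw [he]
  convert h using 1 <;> try rfl
  simp only [sech]
  rw [Real.tanh_eq_sinh_div_cosh, ← one_div, one_div_mul_eq_div, div_div, ← sq, neg_div]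

lemma tanh_hasDerivAt (y : ℝ) : HasDerivAt Real.tanh (sech y ^ 2) y := by
  have h := (Real.hasDerivAt_sinh y).div (Real.hasDerivAt_cosh y) (Real.cosh_pos y).ne'
  have he : Real.tanh = fun t => Real.sinh t / Real.cosh t := funext Real.tanh_eq_sinh_div_cosh
  rw [he]
  convert h using 1 <;> try rfl
  have hid : Real.cosh y ^ 2 - Real.sinh y ^ 2 = 1 := Real.cosh_sq_sub_sinh_sq y
  simp only [sech]
  rw [div_pow, one_pow]
  congr 1
  nlinarith [hid]

lemma abs_tanh_le_one (y : ℝ) : |Real.tanh y| ≤ 1 := by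
  rw [Real.tanh_eq_sinh_div_cosh, abs_div, abs_of_pos (Real.cosh_pos y), div_le_one (Real.cosh_pos y)]
  nlinarith [Real.cosh_sq_sub_sinh_sq y, Real.cosh_pos y, abs_nonneg (Real.sinh y), sq_abs (Real.sinh y)]

lemma sech_pos (y : ℝ) : 0 < sech y := by
  simp only [sech]; positivity

lemma sech_le_one (y : ℝ) : sech y ≤ 1 := by
  simp only [sech]
  rw [div_le_one (Real.cosh_pos y)]
  exact Real.one_le_cosh y

lemma sech_le_sech {a b : ℝ} (h : |a| ≤ |b|) : sech b ≤ sech a := by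
  simp only [sech]
  apply one_div_le_one_div_of_le (Real.cosh_pos a)
  exact Real.cosh_le_cosh.2 h

noncomputable def FF (x s : ℝ) : ℝ := ((4+s)/2) * sech (x + x/2*s) ^ 2

noncomputable def FF1 (x s : ℝ) : ℝ :=
  (1/2) * sech (x + x/2*s) ^ 2
    - ((4+s)/2) * x * (sech (x + x/2*s) ^ 2 * Real.tanh (x + x/2*s))

noncomputable def FF2 (x s : ℝ) : ℝ :=
  -x * (sech (x + x/2*s) ^ 2 * Real.tanh (x + x/2*s))
    + ((4+s)/2) * (x^2/2) *
      (2 * sech (x + x/2*s) ^ 2 * Real.tanh (x + x/2*s) ^ 2 - sech (x + x/2*s) ^ 4)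

noncomputable def FF3 (x s : ℝ) : ℝ :=
  sech (x + x/2*s) ^ 2 *
    (x^2 * Real.tanh (x + x/2*s) ^ 2 - x^2/2 * sech (x + x/2*s) ^ 2
      + x^2/4 * (2 * Real.tanh (x + x/2*s) ^ 2 - sech (x + x/2*s) ^ 2)
      + ((4+s)/2) * x^3 *
        (2 * sech (x + x/2*s) ^ 2 * Real.tanh (x + x/2*s) - Real.tanh (x + x/2*s) ^ 3))

section derivs
variable (x s : ℝ)

private lemma hu : HasDerivAt (fun s : ℝ => x + x/2 * s) (x/2) s := by
  simpa using ((hasDerivAt_id s).const_mul (x/2)).const_add x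

private lemma hS : HasDerivAt (fun s : ℝ => sech (x + x/2*s))
    (-(sech (x + x/2*s) * Real.tanh (x + x/2*s)) * (x/2)) s :=
  (sech_hasDerivAt _).comp s (hu x s)

private lemma hT : HasDerivAt (fun s : ℝ => Real.tanh (x + x/2*s))
    (sech (x + x/2*s) ^ 2 * (x/2)) s :=
  (tanh_hasDerivAt _).comp s (hu x s)

private lemma hlin : HasDerivAt (fun s : ℝ => (4+s)/2) (1/2) s := by
  simpa using ((hasDerivAt_id s).const_add 4).div_const 2

lemma hasDerivAt_FF : HasDerivAt (FF x) (FF1 x s) s := by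
  have h := (hlin s).mul ((hS x s).pow 2)
  convert h using 1 <;> try rfl
  simp only [FF1, Pi.add_apply, Pi.sub_apply, Pi.mul_apply, Pi.pow_apply, Pi.neg_apply]
  push_cast
  ring

lemma hasDerivAt_FF1 : HasDerivAt (FF1 x) (FF2 x s) s := by
  have h := (((hS x s).pow 2).const_mul (1/2 : ℝ)).sub
    ((((hlin s).mul_const x)).mul (((hS x s).pow 2).mul (hT x s)))
  convert h using 1 <;> try rfl
  simp only [FF2, Pi.add_apply, Pi.sub_apply, Pi.mul_apply, Pi.pow_apply, Pi.neg_apply]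
  push_cast
  ring

lemma hasDerivAt_FF2 : HasDerivAt (FF2 x) (FF3 x s) s := by
  have h := ((((hS x s).pow 2).mul (hT x s)).const_mul (-x)).add
    (((hlin s).mul_const (x^2/2)).mul
      (((((hS x s).pow 2).mul ((hT x s).pow 2)).const_mul (2:ℝ)).sub ((hS x s).pow 4)))
  convert h using 1 <;> try rfl
  · ext t; simp only [FF2, Pi.add_apply, Pi.sub_apply, Pi.mul_apply, Pi.pow_apply, Pi.neg_apply]; ring
  · simp only [FF3, Pi.add_apply, Pi.sub_apply, Pi.mul_apply, Pi.pow_apply, Pi.neg_apply]; push_cast; ring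
end derivs

lemma cube_bound {S T s x P : ℝ} (hS0 : (0:ℝ) ≤ S^2) (hS2 : S^2 ≤ 1)
    (hTa : -1 ≤ T) (hTb : T ≤ 1) (hT2 : T^2 ≤ 1)
    (hs1 : -(1/2:ℝ) ≤ s) (hs2 : s ≤ 1/2) (hP : (0:ℝ) ≤ P) (hSx : S^2 ≤ P) :
    |S^2 * (x^2 * T^2 - x^2/2 * S^2 + x^2/4 * (2 * T^2 - S^2)
      + ((4+s)/2) * x^3 * (2 * S^2 * T - T^3))| ≤ 9 * ((1 + |x|^3) * P) := by
  have hA : |x^2 * T^2 - x^2/2 * S^2 + x^2/4 * (2*T^2 - S^2)| ≤ 9/4 * x^2 := by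
    rw [abs_le]
    constructor
    · nlinarith [mul_nonneg (sq_nonneg x) (by linarith : (0:ℝ) ≤ 1 - T^2),
        mul_nonneg (sq_nonneg x) (by linarith : (0:ℝ) ≤ 1 - S^2),
        mul_nonneg (sq_nonneg x) hS0, mul_nonneg (sq_nonneg x) (sq_nonneg T)]
    · nlinarith [mul_nonneg (sq_nonneg x) (by linarith : (0:ℝ) ≤ 1 - T^2),
        mul_nonneg (sq_nonneg x) (by linarith : (0:ℝ) ≤ 1 - S^2),
        mul_nonneg (sq_nonneg x) hS0, mul_nonneg (sq_nonneg x) (sq_nonneg T)]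
  have hW : |((4+s)/2) * x^3 * (2*S^2*T - T^3)| ≤ 27/4 * |x|^3 := by
    rw [abs_mul, abs_mul, abs_pow]
    have h1 : |(4+s)/2| ≤ 9/4 := by
      rw [abs_of_pos (by linarith : (0:ℝ) < (4+s)/2)]; linarith
    have c1' : (0:ℝ) ≤ 1 + T^3 := by nlinarith [sq_nonneg (2*T-1), mul_nonneg (by linarith : (0:ℝ) ≤ 1+T) (by nlinarith [sq_nonneg (2*T-1)] : (0:ℝ) ≤ 1 - T + T^2)]
    have c2' : (0:ℝ) ≤ 1 - T^3 := by nlinarith [mul_nonneg (by linarith : (0:ℝ) ≤ 1-T) (by nlinarith [sq_nonneg (2*T+1)] : (0:ℝ) ≤ 1 + T + T^2)]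
    have d1 : (0:ℝ) ≤ S^2 + S^2*T := by nlinarith [mul_nonneg hS0 (by linarith : (0:ℝ) ≤ 1 + T)]
    have d2 : (0:ℝ) ≤ S^2 - S^2*T := by nlinarith [mul_nonneg hS0 (by linarith : (0:ℝ) ≤ 1 - T)]
    have h2 : |2*S^2*T - T^3| ≤ 3 := by
      rw [abs_le]
      constructor <;> [linarith; linarith]
    calc |(4+s)/2| * |x|^3 * |2*S^2*T - T^3| ≤ (9/4) * |x|^3 * 3 := by
          have h0 : (0:ℝ) ≤ |x|^3 := by positivity
          gcongr
      _ = 27/4 * |x|^3 := by ring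
  have hx2 : x^2 ≤ 1 + |x|^3 := by
    nlinarith [mul_nonneg (sq_nonneg (|x|-1)) (by positivity : (0:ℝ) ≤ |x|+1),
      sq_abs x, abs_nonneg x]
  have hG : |x^2 * T^2 - x^2/2 * S^2 + x^2/4 * (2*T^2 - S^2)
      + ((4+s)/2) * x^3 * (2*S^2*T - T^3)| ≤ 9 * (1 + |x|^3) := by
    calc |x^2 * T^2 - x^2/2 * S^2 + x^2/4 * (2*T^2 - S^2)
          + ((4+s)/2) * x^3 * (2*S^2*T - T^3)|
        ≤ |x^2 * T^2 - x^2/2 * S^2 + x^2/4 * (2*T^2 - S^2)|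
          + |((4+s)/2) * x^3 * (2*S^2*T - T^3)| := abs_add_le _ _
      _ ≤ 9/4 * x^2 + 27/4 * |x|^3 := add_le_add hA hW
      _ ≤ 9 * (1 + |x|^3) := by linarith [pow_nonneg (abs_nonneg x) 3]
  rw [abs_mul, abs_of_nonneg hS0]
  calc S^2 * |x^2 * T^2 - x^2/2 * S^2 + x^2/4 * (2*T^2 - S^2)
        + ((4+s)/2) * x^3 * (2*S^2*T - T^3)|
      ≤ P * (9 * (1 + |x|^3)) := mul_le_mul hSx hG (abs_nonneg _) hP
    _ = 9 * ((1 + |x|^3) * P) := by ring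

lemma FF3_bound (x : ℝ) {s : ℝ} (hs : s ∈ Set.Icc (-(1/2):ℝ) (1/2)) :
    |FF3 x s| ≤ 9 * ((1 + |x|^3) * sech (x/2)^2) := by
  obtain ⟨hs1, hs2⟩ := hs
  have hT1 := abs_tanh_le_one (x + x/2*s)
  have hSx : sech (x + x/2*s)^2 ≤ sech (x/2)^2 := by
    have hux : x + x/2*s = x * ((2+s)/2) := by ring
    have h1 : |x/2| ≤ |x + x/2*s| := by
      rw [hux, abs_mul, abs_of_pos (by linarith : (0:ℝ) < (2+s)/2)]
      rw [abs_div, abs_of_pos (by norm_num : (0:ℝ) < 2)]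
      nlinarith [abs_nonneg x]
    have h2 := sech_le_sech h1
    have h3 := (sech_pos (x + x/2*s)).le
    nlinarith
  rw [FF3]
  exact cube_bound (sq_nonneg _)
    (by nlinarith [sech_le_one (x + x/2*s), (sech_pos (x + x/2*s)).le])
    (abs_le.1 hT1).1 (abs_le.1 hT1).2
    (by nlinarith [sq_abs (Real.tanh (x + x/2*s)), hT1, abs_nonneg (Real.tanh (x + x/2*s))])
    hs1 hs2 (sq_nonneg _) hSx

lemma FF_zero (x : ℝ) : FF x 0 = 2 * sech x ^ 2 := by
  simp only [FF, mul_zero, add_zero]; norm_num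

lemma FF1_zero (x : ℝ) : FF1 x 0 = q₁ x := by
  simp only [FF1, q₁, mul_zero, add_zero]; ring

lemma FF2_zero (x : ℝ) : FF2 x 0 = 2 * q₂ x := by
  simp only [FF2, q₂, mul_zero, add_zero]; ring


/-- Taylor remainder bound: there is `C > 0` so that for all `ε ∈ [−1/2,1/2]`
and all `x`,
`|((4+ε)/2)·sech²(((2+ε)/2)x) − 2sech²x − ε·q₁(x) − ε²·q₂(x)|
  ≤ C·|ε|³·(1+|x|³)·sech²(x/2)`. -/
theorem stmt_5 :
    ∃ C : ℝ, 0 < C ∧ ∀ ε : ℝ, ε ∈ Set.Icc (-(1/2) : ℝ) (1/2) → ∀ x : ℝ,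
      |((4 + ε) / 2) * (sech (((2 + ε) / 2) * x)) ^ 2
        - 2 * sech x ^ 2 - ε * q₁ x - ε ^ 2 * q₂ x|
      ≤ C * |ε| ^ 3 * (1 + |x| ^ 3) * sech (x / 2) ^ 2 := by
  refine ⟨9, by norm_num, ?_⟩
  intro ε hε x
  obtain ⟨hε1, hε2⟩ := hε
  set K := (1 + |x|^3) * sech (x/2)^2 with hK
  have hK0 : (0:ℝ) ≤ K := by
    apply mul_nonneg _ (sq_nonneg _)
    positivity
  have memIcc : ∀ {t y : ℝ}, t ∈ Set.Icc (-(1/2):ℝ) (1/2) → y ∈ Set.uIcc 0 t →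
      y ∈ Set.Icc (-(1/2):ℝ) (1/2) ∧ |y| ≤ |t| := by
    intro t y ht hy
    rcases Set.mem_uIcc.1 hy with ⟨h1, h2⟩ | ⟨h1, h2⟩
    · exact ⟨⟨by linarith [ht.1], by linarith [ht.2]⟩,
        by rw [abs_of_nonneg h1]; exact h2.trans (le_abs_self t)⟩
    · refine ⟨⟨by linarith [ht.1], by linarith [ht.2]⟩, ?_⟩
      rw [abs_of_nonpos h2]
      calc -y ≤ -t := by linarith
        _ ≤ |t| := neg_le_abs t
  have stepA : ∀ t ∈ Set.Icc (-(1/2):ℝ) (1/2), |FF2 x t - FF2 x 0| ≤ 9*K*|t| := by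
    intro t ht
    have h := Convex.norm_image_sub_le_of_norm_hasDerivWithin_le
      (f := FF2 x) (f' := FF3 x) (C := 9*K) (s := Set.uIcc (0:ℝ) t)
      (fun y _ => (hasDerivAt_FF2 x y).hasDerivWithinAt)
      (fun y hy => by
        rw [Real.norm_eq_abs]
        calc |FF3 x y| ≤ 9*((1 + |x|^3) * sech (x/2)^2) := FF3_bound x (memIcc ht hy).1
          _ = 9*K := by rw [hK])
      (convex_uIcc 0 t) Set.left_mem_uIcc Set.right_mem_uIcc
    simpa [Real.norm_eq_abs] using h
  have stepB : ∀ t ∈ Set.Icc (-(1/2):ℝ) (1/2),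
      |FF1 x t - FF1 x 0 - t * FF2 x 0| ≤ 9*K*|t|^2 := by
    intro t ht
    have hg : ∀ y : ℝ, HasDerivAt (fun s => FF1 x s - FF1 x 0 - s * FF2 x 0)
        (FF2 x y - FF2 x 0) y := by
      intro y
      have h := ((hasDerivAt_FF1 x y).sub_const (FF1 x 0)).sub
        ((hasDerivAt_id y).mul_const (FF2 x 0))
      simp at h
      exact h
    have h := Convex.norm_image_sub_le_of_norm_hasDerivWithin_le
      (C := 9*K*|t|) (s := Set.uIcc (0:ℝ) t)
      (fun y _ => (hg y).hasDerivWithinAt)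
      (fun y hy => by
        rw [Real.norm_eq_abs]
        obtain ⟨hyI, hyt⟩ := memIcc ht hy
        calc |FF2 x y - FF2 x 0| ≤ 9*K*|y| := stepA y hyI
          _ ≤ 9*K*|t| := by
            have h9 : (0:ℝ) ≤ 9*K := by linarith
            exact mul_le_mul_of_nonneg_left hyt h9)
      (convex_uIcc 0 t) Set.left_mem_uIcc Set.right_mem_uIcc
    simp only [Real.norm_eq_abs, zero_mul, sub_zero, sub_self] at h
    calc |FF1 x t - FF1 x 0 - t * FF2 x 0| ≤ 9*K*|t| * |t| := h
      _ = 9*K*|t|^2 := by ring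
  have stepC : |FF x ε - FF x 0 - ε * FF1 x 0 - ε^2/2 * FF2 x 0| ≤ 9*K*|ε|^3 := by
    have hg : ∀ y : ℝ, HasDerivAt
        (fun s => FF x s - FF x 0 - s * FF1 x 0 - s^2/2 * FF2 x 0)
        (FF1 x y - FF1 x 0 - y * FF2 x 0) y := by
      intro y
      have h := (((hasDerivAt_FF x y).sub_const (FF x 0)).sub
        ((hasDerivAt_id y).mul_const (FF1 x 0))).sub
        (((hasDerivAt_pow 2 y).div_const 2).mul_const (FF2 x 0))
      convert h using 1 <;> try rfl
      push_cast
      ring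
    have hεI : ε ∈ Set.Icc (-(1/2):ℝ) (1/2) := ⟨hε1, hε2⟩
    have h := Convex.norm_image_sub_le_of_norm_hasDerivWithin_le
      (C := 9*K*|ε|^2) (s := Set.uIcc (0:ℝ) ε)
      (fun y _ => (hg y).hasDerivWithinAt)
      (fun y hy => by
        rw [Real.norm_eq_abs]
        obtain ⟨hyI, hyt⟩ := memIcc hεI hy
        calc |FF1 x y - FF1 x 0 - y * FF2 x 0| ≤ 9*K*|y|^2 := stepB y hyI
          _ ≤ 9*K*|ε|^2 := by
            have h9 : (0:ℝ) ≤ 9*K := by linarith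
            have : |y|^2 ≤ |ε|^2 := by
              exact pow_le_pow_left₀ (abs_nonneg y) hyt 2
            exact mul_le_mul_of_nonneg_left this h9)
      (convex_uIcc 0 ε) Set.left_mem_uIcc Set.right_mem_uIcc
    simp only [Real.norm_eq_abs, zero_mul, sub_zero, sub_self] at h
    norm_num at h
    calc |FF x ε - FF x 0 - ε * FF1 x 0 - ε^2/2 * FF2 x 0| ≤ 9*K*ε^2 * |ε| := h
      _ = 9*K*|ε|^3 := by rw [← sq_abs ε]; ring
  have harg : ((2 + ε)/2) * x = x + x/2*ε := by ring
  rw [harg]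
  have heq : ((4 + ε)/2) * sech (x + x/2*ε) ^ 2 - 2 * sech x ^ 2 - ε * q₁ x - ε^2 * q₂ x
      = FF x ε - FF x 0 - ε * FF1 x 0 - ε^2/2 * FF2 x 0 := by
    rw [FF_zero, FF1_zero, FF2_zero]
    simp only [FF]
    ring
  rw [heq]
  calc |FF x ε - FF x 0 - ε * FF1 x 0 - ε^2/2 * FF2 x 0| ≤ 9*K*|ε|^3 := stepC
    _ = 9 * |ε|^3 * (1 + |x|^3) * sech (x/2)^2 := by rw [hK]; ring
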